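/- arXiv:2209.03587 — 2 statements merged into one kernel-verified Lean document; each statement's English description precedes it below -/
import Mathlib

section
/- Let X be a complete separable metric space. For i = 0,1 let ν_i^n, ν_i be Borel probability measures on X with ν_i^n → ν_i weakly, let π^n be a coupling of ν_0^n and ν_1^n converging weakly to a coupling π of ν_0 and ν_1, and let φ : X × X → ℝ be bounded continuous. Suppose there exists a Borel probability measure μ on X such that ν_i^n = ρ_i^n μ and ν_i = ρ_i μ are absolutely continuous with respect to μ, ∫_X |ρ_i^n − ρ_i| dμ → 0 as n → ∞, and f_i : X → ℝ are Borel functions that are μ-essentially bounded, for i = 0,1. Then for i = 0,1: limsup_{n→∞} ∫_{X×X} φ(x₀,x₁)·f_i(x_i) dπ^n(x₀,x₁) ≤ ∫_{X×X} φ(x₀,x₁)·f_i(x_i) dπ(x₀,x₁). -/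
/-- A bundled mm-space: a complete separable metric space with a Borel probability measure. -/
structure MMSpace where
  X : Type
  [metric : MetricSpace X]
  [cpl : CompleteSpace X]
  [sep : TopologicalSpace.SeparableSpace X]
  [mble : MeasurableSpace X]
  [borel : BorelSpace X]
  μ : MeasureTheory.Measure X
  [prob : MeasureTheory.IsProbabilityMeasure μ]

attribute [instance] MMSpace.metric MMSpace.cpl MMSpace.sep MMSpace.mble MMSpace.borel MMSpace.prob

open MeasureTheory ENNReal Filter Topology Set

noncomputable section

/-- A coupling of two measures on `X` is a measure on `X × X` whose marginals are the
given measures. -/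
def IsCoupling {X : Type*} [MeasurableSpace X] (π : Measure (X × X)) (μ ν : Measure X) : Prop :=
  π.map Prod.fst = μ ∧ π.map Prod.snd = ν

/-- A measure has finite second moment if `∫ d(x,x₀)² dμ < ∞` for some base point. -/
def HasFiniteSecondMoment {X : Type*} [PseudoMetricSpace X] [MeasurableSpace X]
    (μ : Measure X) : Prop :=
  ∃ x₀ : X, ∫⁻ x, ENNReal.ofReal (dist x x₀) ^ 2 ∂μ < ∞

/-- The square-root of the quadratic transport cost of a coupling. -/
def cost2 {X : Type*} [PseudoMetricSpace X] [MeasurableSpace X] (π : Measure (X × X)) : ℝ≥0∞ :=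
  (∫⁻ p, ENNReal.ofReal (dist p.1 p.2) ^ 2 ∂π) ^ (1 / 2 : ℝ)

/-- The 2-Wasserstein distance (valued in `[0,∞]`). -/
def W2 {X : Type*} [PseudoMetricSpace X] [MeasurableSpace X] (μ ν : Measure X) : ℝ≥0∞ :=
  ⨅ (π : Measure (X × X)) (_ : IsCoupling π μ ν), cost2 π

/-- A coupling is optimal if it attains the 2-Wasserstein distance. -/
def IsOptimalCoupling {X : Type*} [PseudoMetricSpace X] [MeasurableSpace X]
    (π : Measure (X × X)) (μ ν : Measure X) : Prop :=
  IsCoupling π μ ν ∧ cost2 π = W2 μ ν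

open Classical in
/-- The Rényi entropy `S_{N',μ}(ν) = ∫ ρ^{1-1/N'} dμ` if `ν = ρμ ≪ μ`, and `∞` otherwise. -/
def renyiEntropy {X : Type*} [MeasurableSpace X] (N' : ℝ) (μ ν : Measure X) : ℝ≥0∞ :=
  if ν ≪ μ then ∫⁻ x, (ν.rnDeriv μ x) ^ (1 - 1 / N') ∂μ else ∞

/-- Weak convergence of a sequence of measures: convergence of integrals of all bounded
continuous functions. -/
def WeakConv {X : Type*} [TopologicalSpace X] [MeasurableSpace X]
    (μs : ℕ → Measure X) (μ : Measure X) : Prop :=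
  ∀ f : BoundedContinuousFunction X ℝ,
    Tendsto (fun n => ∫ x, f x ∂(μs n)) atTop (𝓝 (∫ x, f x ∂μ))

/-- Tightness of a sequence of measures. -/
def IsTightSeq {X : Type*} [TopologicalSpace X] [MeasurableSpace X]
    (μs : ℕ → Measure X) : Prop :=
  ∀ ε : ℝ, 0 < ε → ∃ K : Set X, IsCompact K ∧ ∀ n, μs n Kᶜ < ENNReal.ofReal ε

/-- The function `s_κ`, with the convention `s_κ(0) = 1`. -/
def sKappa (κ θ : ℝ) : ℝ :=
  if θ = 0 then 1
  else if 0 < κ then Real.sin (Real.sqrt κ * θ) / (Real.sqrt κ * θ)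
  else if κ < 0 then Real.sinh (Real.sqrt (-κ) * θ) / (Real.sqrt (-κ) * θ)
  else 1

/-- `ω_κ = π/√κ` for `κ > 0` and `∞` otherwise. -/
def omegaKappa (κ : ℝ) : ℝ≥0∞ :=
  if 0 < κ then ENNReal.ofReal (Real.pi / Real.sqrt κ) else ∞

/-- The coefficient `τ_{K,N}^{(t)}(θ)`, valued in `[0,∞]`. -/
def tauCoeff (K N t θ : ℝ) : ℝ≥0∞ :=
  if ENNReal.ofReal θ < omegaKappa (K / (N - 1)) then
    ENNReal.ofReal (t * (sKappa (K / (N - 1)) (t * θ) / sKappa (K / (N - 1)) θ) ^ (1 - 1 / N))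
  else ∞

/-- The coefficient `σ_κ^{(t)}(θ)`, valued in `[0,∞]`. -/
def sigmaCoeff (κ t θ : ℝ) : ℝ≥0∞ :=
  if ENNReal.ofReal θ < omegaKappa κ then
    ENNReal.ofReal (t * sKappa κ (t * θ) / sKappa κ θ)
  else ∞

/-- The curvature-dimension condition `CD(K,N)` for `N < 0`, for a (probability) measure on a
metric space. -/
def IsCDSpace {X : Type*} [MetricSpace X] [MeasurableSpace X] (K N : ℝ) (μX : Measure X) : Prop :=
  ∀ ν₀ ν₁ : Measure X, IsProbabilityMeasure ν₀ → IsProbabilityMeasure ν₁ →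
    ν₀ ≪ μX → ν₁ ≪ μX →
    HasFiniteSecondMoment ν₀ → HasFiniteSecondMoment ν₁ →
    renyiEntropy N μX ν₀ < ∞ → renyiEntropy N μX ν₁ < ∞ →
    ∃ (νt : ℝ → Measure X) (π : Measure (X × X)),
      νt 0 = ν₀ ∧ νt 1 = ν₁ ∧
      (∀ s ∈ Icc (0:ℝ) 1, ∀ t ∈ Icc (0:ℝ) 1,
        W2 (νt s) (νt t) = ENNReal.ofReal |s - t| * W2 ν₀ ν₁) ∧
      IsOptimalCoupling π ν₀ ν₁ ∧
      (∀ t ∈ Icc (0:ℝ) 1, ∀ N' ∈ Ico N (0:ℝ),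
        renyiEntropy N' μX ν₀ < ∞ → renyiEntropy N' μX ν₁ < ∞ →
        renyiEntropy N' μX (νt t) ≤
          (∫⁻ p, tauCoeff K N' (1 - t) (dist p.1 p.2) * (ν₀.rnDeriv μX p.1) ^ (-(1 / N')) ∂π)
          + ∫⁻ p, tauCoeff K N' t (dist p.1 p.2) * (ν₁.rnDeriv μX p.2) ^ (-(1 / N')) ∂π)

/-- The reduced curvature-dimension condition `CD*(K,N)` for `N < 0`. -/
def IsCDStarSpace {X : Type*} [MetricSpace X] [MeasurableSpace X] (K N : ℝ)
    (μX : Measure X) : Prop :=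
  ∀ ν₀ ν₁ : Measure X, IsProbabilityMeasure ν₀ → IsProbabilityMeasure ν₁ →
    ν₀ ≪ μX → ν₁ ≪ μX →
    HasFiniteSecondMoment ν₀ → HasFiniteSecondMoment ν₁ →
    renyiEntropy N μX ν₀ < ∞ → renyiEntropy N μX ν₁ < ∞ →
    ∃ (νt : ℝ → Measure X) (π : Measure (X × X)),
      νt 0 = ν₀ ∧ νt 1 = ν₁ ∧
      (∀ s ∈ Icc (0:ℝ) 1, ∀ t ∈ Icc (0:ℝ) 1,
        W2 (νt s) (νt t) = ENNReal.ofReal |s - t| * W2 ν₀ ν₁) ∧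
      IsOptimalCoupling π ν₀ ν₁ ∧
      (∀ t ∈ Icc (0:ℝ) 1, ∀ N' ∈ Ico N (0:ℝ),
        renyiEntropy N' μX ν₀ < ∞ → renyiEntropy N' μX ν₁ < ∞ →
        renyiEntropy N' μX (νt t) ≤
          (∫⁻ p, sigmaCoeff (K / N') (1 - t) (dist p.1 p.2)
              * (ν₀.rnDeriv μX p.1) ^ (-(1 / N')) ∂π)
          + ∫⁻ p, sigmaCoeff (K / N') t (dist p.1 p.2)
              * (ν₁.rnDeriv μX p.2) ^ (-(1 / N')) ∂π)

/-- The conditioned (normalized restricted) measure `ν_B`. -/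
def condProb {X : Type*} [MeasurableSpace X] (ν : Measure X) (B : Set X) : Measure X :=
  (ν B)⁻¹ • ν.restrict B

/-- Inverse hyperbolic cosine, `arcosh x = log (x + √(x²-1))`. -/
def acosh (x : ℝ) : ℝ := Real.log (x + Real.sqrt (x ^ 2 - 1))

/-- A parameter of an mm-space: a Borel map `[0,1) → X` pushing the Lebesgue measure to `μ`. -/
def IsParameter (A : MMSpace) (φ : ℝ → A.X) : Prop :=
  Measurable φ ∧ Measure.map φ (volume.restrict (Ico (0:ℝ) 1)) = A.μ

/-- The Ky Fan distance between two measurable functions on `[0,1)`. -/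
def kyFan (f g : ℝ → ℝ) : ℝ :=
  sInf {ε : ℝ | 0 ≤ ε ∧
    (volume.restrict (Ico (0:ℝ) 1)) {x | ε < |f x - g x|} ≤ ENNReal.ofReal ε}

/-- The pullback of the 1-Lipschitz functions on an mm-space by a parameter. -/
def pullLip (A : MMSpace) (φ : ℝ → A.X) : Set (ℝ → ℝ) :=
  {h | ∃ f : A.X → ℝ, LipschitzWith 1 f ∧ h = f ∘ φ}

/-- The Hausdorff distance between two sets of functions with respect to the Ky Fan metric. -/
def hausdorffKF (A B : Set (ℝ → ℝ)) : ℝ :=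
  max (⨆ f ∈ A, ⨅ g ∈ B, kyFan f g) (⨆ g ∈ B, ⨅ f ∈ A, kyFan f g)

/-- The observable distance between two mm-spaces. -/
def dconc (A B : MMSpace) : ℝ :=
  sInf {r : ℝ | ∃ φ ψ, IsParameter A φ ∧ IsParameter B ψ ∧
    r = hausdorffKF (pullLip A φ) (pullLip B ψ)}

end

noncomputable section

/-- The smooth approximation `F_a(x) = a⁻¹ log(e^{ax} + e^{-ax})` of `|x|`. -/
def Fa (a x : ℝ) : ℝ := a⁻¹ * Real.log (Real.exp (a * x) + Real.exp (-(a * x)))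

/-- A (minimizing, constant-speed) geodesic parametrized by `[0,1]`. -/
def IsGeodOn01 {X : Type*} [PseudoMetricSpace X] (γ : ℝ → X) : Prop :=
  ∀ s ∈ Set.Icc (0:ℝ) 1, ∀ s' ∈ Set.Icc (0:ℝ) 1,
    dist (γ s) (γ s') = |s - s'| * dist (γ 0) (γ 1)

end


/-! Approximate `fᵢ` in `L¹(νᵢ)` by a bounded continuous `g`. Against `g` the integrand
`φ(x₀,x₁) g(xᵢ)` is bounded continuous, so weak convergence of `πⁿ` applies. The error
`|∫ φ (fᵢ - g)(xᵢ) dπⁿ| ≤ ‖φ‖ ∫ |fᵢ - g| dνᵢⁿ` only involves the marginal `νᵢⁿ`, and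
`∫ |fᵢ - g| dνᵢⁿ → ∫ |fᵢ - g| dνᵢ` because `fᵢ - g` is `μ`-essentially bounded and `ρᵢⁿ → ρᵢ` in
`L¹(μ)`. So the integrals in fact converge, and the `limsup` is their limit. -/

open scoped BoundedContinuousFunction

theorem tendsto_of_forall_approx {ι E : Type*} [PseudoMetricSpace E] {l : Filter ι}
    {a : ι → E} {A : E}
    (h : ∀ ε > 0, ∃ (b : ι → E) (B : E), Tendsto b l (𝓝 B) ∧ dist A B ≤ ε ∧
      ∀ᶠ i in l, dist (a i) (b i) ≤ ε) :
    Tendsto a l (𝓝 A) := by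
  refine Metric.tendsto_nhds.2 fun ε hε => ?_
  obtain ⟨b, B, hbB, hAB, hab⟩ := h (ε / 4) (by positivity)
  filter_upwards [hab, Metric.tendsto_nhds.1 hbB (ε / 4) (by positivity)] with i hai hbi
  calc dist (a i) A ≤ dist (a i) (b i) + dist (b i) B + dist B A := dist_triangle4 _ _ _ _
    _ < ε := by rw [dist_comm B]; linarith

section Densities

variable {X : Type*} [MeasurableSpace X] {μ : Measure X}

theorem integral_withDensity_ofReal {r : X → ℝ} (hr : Measurable r) (hr0 : ∀ x, 0 ≤ r x)
    (h : X → ℝ) :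
    ∫ x, h x ∂μ.withDensity (fun x => ENNReal.ofReal (r x)) = ∫ x, r x * h x ∂μ := by
  rw [integral_withDensity_eq_integral_toReal_smul hr.ennreal_ofReal
    (ae_of_all _ fun _ => ENNReal.ofReal_lt_top)]
  simp only [ENNReal.toReal_ofReal (hr0 _), smul_eq_mul]

theorem integrable_of_isFiniteMeasure_withDensity_ofReal {r : X → ℝ}
    (hr : AEStronglyMeasurable r μ) (hr0 : 0 ≤ᵐ[μ] r)
    [IsFiniteMeasure (μ.withDensity fun x => ENNReal.ofReal (r x))] : Integrable r μ := by
  refine ⟨hr, (hasFiniteIntegral_iff_ofReal hr0).2 ?_⟩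
  rw [← setLIntegral_univ, ← withDensity_apply _ MeasurableSet.univ]
  exact measure_lt_top _ _

theorem tendsto_integral_withDensity_of_tendsto_integral_abs_sub {ρs : ℕ → X → ℝ} {ρ : X → ℝ}
    (hρsm : ∀ n, Measurable (ρs n)) (hρm : Measurable ρ)
    (hρs0 : ∀ n x, 0 ≤ ρs n x) (hρ0 : ∀ x, 0 ≤ ρ x)
    (hρsi : ∀ n, Integrable (ρs n) μ) (hρi : Integrable ρ μ)
    (hL1 : Tendsto (fun n => ∫ x, |ρs n x - ρ x| ∂μ) atTop (𝓝 0))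
    {h : X → ℝ} (hh : AEStronglyMeasurable h μ) {M : ℝ} (hM : ∀ᵐ x ∂μ, |h x| ≤ M) :
    Tendsto (fun n => ∫ x, h x ∂μ.withDensity fun x => ENNReal.ofReal (ρs n x)) atTop
      (𝓝 (∫ x, h x ∂μ.withDensity fun x => ENNReal.ofReal (ρ x))) := by
  simp only [integral_withDensity_ofReal (hρsm _) (hρs0 _), integral_withDensity_ofReal hρm hρ0]
  rw [tendsto_iff_norm_sub_tendsto_zero]
  refine squeeze_zero (fun _ => norm_nonneg _) (fun n => ?_) (by simpa using hL1.const_mul M)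
  rw [← integral_sub ((hρsi n).mul_bdd hh hM) (hρi.mul_bdd hh hM), ← integral_const_mul]
  refine norm_integral_le_of_norm_le (((hρsi n).sub hρi).abs.const_mul M) (hM.mono fun x hx => ?_)
  rw [← sub_mul, norm_mul, Real.norm_eq_abs, Real.norm_eq_abs, mul_comm]
  exact mul_le_mul_of_nonneg_right hx (abs_nonneg _)

end Densities

section Pushforward

variable {Z X : Type*} [TopologicalSpace Z] [MeasurableSpace Z] [OpensMeasurableSpace Z]
  [MeasurableSpace X] {θ : Measure Z} {ν : Measure X} {q : Z → X}

theorem integrable_bcf_mul_comp (hq : Measurable q) (hθ : θ.map q = ν) (φ : Z →ᵇ ℝ)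
    {h : X → ℝ} (hh : Integrable h ν) : Integrable (fun z => φ z * h (q z)) θ := by
  subst hθ
  exact (hh.comp_measurable hq).bdd_mul φ.continuous.aestronglyMeasurable
    (ae_of_all _ φ.norm_coe_le_norm)

theorem norm_integral_bcf_mul_comp_sub_le (hq : Measurable q) (hθ : θ.map q = ν)
    (φ : Z →ᵇ ℝ) {f g : X → ℝ} (hf : Integrable f ν) (hg : Integrable g ν) :
    ‖∫ z, φ z * f (q z) ∂θ - ∫ z, φ z * g (q z) ∂θ‖ ≤ ‖φ‖ * ∫ x, |f x - g x| ∂ν := by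
  subst hθ
  rw [← integral_sub (integrable_bcf_mul_comp hq rfl φ hf) (integrable_bcf_mul_comp hq rfl φ hg),
    integral_map (f := fun x => |f x - g x|) hq.aemeasurable (hf.sub hg).abs.aestronglyMeasurable,
    ← integral_const_mul]
  have hfg : Integrable (fun z => |f (q z) - g (q z)|) θ := ((hf.sub hg).comp_measurable hq).abs
  refine norm_integral_le_of_norm_le (hfg.const_mul _) (ae_of_all _ fun z => ?_)
  rw [← mul_sub, norm_mul, Real.norm_eq_abs (f _ - _)]
  exact mul_le_mul_of_nonneg_right (φ.norm_coe_le_norm z) (abs_nonneg _)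

end Pushforward

theorem tendsto_integral_bcf_mul_comp_of_tendsto_integral_abs_sub
    {Z X : Type*} [TopologicalSpace Z] [MeasurableSpace Z] [OpensMeasurableSpace Z]
    [TopologicalSpace X] [TopologicalSpace.PseudoMetrizableSpace X] [MeasurableSpace X]
    [BorelSpace X] {μ : Measure X} {ρs : ℕ → X → ℝ} {ρ : X → ℝ}
    (hρsm : ∀ n, Measurable (ρs n)) (hρm : Measurable ρ)
    (hρs0 : ∀ n x, 0 ≤ ρs n x) (hρ0 : ∀ x, 0 ≤ ρ x)
    (hρsi : ∀ n, Integrable (ρs n) μ) (hρi : Integrable ρ μ)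
    (hL1 : Tendsto (fun n => ∫ x, |ρs n x - ρ x| ∂μ) atTop (𝓝 0))
    {θs : ℕ → Measure Z} {θ : Measure Z} {q : Z → X} (hq : Continuous q)
    (hθs : ∀ n, (θs n).map q = μ.withDensity fun x => ENNReal.ofReal (ρs n x))
    (hθ : θ.map q = μ.withDensity fun x => ENNReal.ofReal (ρ x))
    (hw : WeakConv θs θ) (φ : Z →ᵇ ℝ) {f : X → ℝ} (hf : Measurable f) {M : ℝ}
    (hM : ∀ᵐ x ∂μ, |f x| ≤ M) :
    Tendsto (fun n => ∫ z, φ z * f (q z) ∂θs n) atTop (𝓝 (∫ z, φ z * f (q z) ∂θ)) := by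
  have hfi : ∀ (ν : Measure X) [IsFiniteMeasure ν], ν ≪ μ → Integrable f ν := fun _ _ hν =>
    .of_bound hf.aestronglyMeasurable M (hν.ae_le hM)
  have := isFiniteMeasure_withDensity_ofReal hρi.2
  refine tendsto_of_forall_approx fun ε hε => ?_
  obtain ⟨δ, hδ, hφδ⟩ : ∃ δ > 0, ‖φ‖ * (2 * δ) ≤ ε := by
    have hpos : 0 < 2 * ‖φ‖ + 1 := by positivity
    refine ⟨ε / (2 * ‖φ‖ + 1), by positivity, ?_⟩
    calc ‖φ‖ * (2 * (ε / (2 * ‖φ‖ + 1))) ≤ (2 * ‖φ‖ + 1) * (ε / (2 * ‖φ‖ + 1)) := by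
          nlinarith [show 0 < ε / (2 * ‖φ‖ + 1) by positivity]
      _ = ε := mul_div_cancel₀ ε hpos.ne'
  obtain ⟨g, hfg, -⟩ := (hfi _ (withDensity_absolutelyContinuous μ fun x => ENNReal.ofReal (ρ x))
    ).exists_boundedContinuous_integral_sub_le hδ
  simp only [Real.norm_eq_abs] at hfg
  have hfg_lim := tendsto_integral_withDensity_of_tendsto_integral_abs_sub hρsm hρm hρs0 hρ0
    hρsi hρi hL1 (h := fun x => |f x - g x|)
    (hf.sub g.continuous.measurable).abs.aestronglyMeasurable (M := M + ‖g‖)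
    (hM.mono fun x hx => (abs_abs (f x - g x)).trans_le <| (abs_sub _ _).trans <|
      add_le_add hx (g.norm_coe_le_norm x))
  refine ⟨fun n => ∫ z, φ z * g (q z) ∂θs n, ∫ z, φ z * g (q z) ∂θ,
    hw (φ * g.compContinuous ⟨q, hq⟩), ?_, ?_⟩
  · rw [dist_eq_norm]
    calc _ ≤ ‖φ‖ * ∫ x, |f x - g x| ∂μ.withDensity fun x => ENNReal.ofReal (ρ x) :=
          norm_integral_bcf_mul_comp_sub_le hq.measurable hθ φ
            (hfi _ (withDensity_absolutelyContinuous _ _)) (g.integrable _)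
      _ ≤ ε := (mul_le_mul_of_nonneg_left (by linarith) (norm_nonneg φ)).trans hφδ
  · filter_upwards [hfg_lim.eventually (gt_mem_nhds (show _ < 2 * δ by linarith))] with n hn
    have := isFiniteMeasure_withDensity_ofReal (hρsi n).2
    rw [dist_eq_norm]
    calc _ ≤ ‖φ‖ * ∫ x, |f x - g x| ∂μ.withDensity fun x => ENNReal.ofReal (ρs n x) :=
          norm_integral_bcf_mul_comp_sub_le hq.measurable (hθs n) φ
            (hfi _ (withDensity_absolutelyContinuous _ _)) (g.integrable _)
      _ ≤ ε := (mul_le_mul_of_nonneg_left hn.le (norm_nonneg φ)).trans hφδ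

open MeasureTheory Filter Set in
theorem integral_limsup_of_L1_densities_general {X : Type*} [MetricSpace X]
    [TopologicalSpace.SeparableSpace X] [MeasurableSpace X] [BorelSpace X]
    (μ : Measure X)
    (ρ0s ρ1s : ℕ → X → ℝ) (ρ0 ρ1 : X → ℝ)
    (hρ0sm : ∀ n, Measurable (ρ0s n)) (hρ1sm : ∀ n, Measurable (ρ1s n))
    (hρ0m : Measurable ρ0) (hρ1m : Measurable ρ1)
    (hρ0snn : ∀ n x, 0 ≤ ρ0s n x) (hρ1snn : ∀ n x, 0 ≤ ρ1s n x)
    (hρ0nn : ∀ x, 0 ≤ ρ0 x) (hρ1nn : ∀ x, 0 ≤ ρ1 x)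
    (hp0 : ∀ n, IsProbabilityMeasure (μ.withDensity fun x => ENNReal.ofReal (ρ0s n x)))
    (hp1 : ∀ n, IsProbabilityMeasure (μ.withDensity fun x => ENNReal.ofReal (ρ1s n x)))
    (hq0 : IsProbabilityMeasure (μ.withDensity fun x => ENNReal.ofReal (ρ0 x)))
    (hq1 : IsProbabilityMeasure (μ.withDensity fun x => ENNReal.ofReal (ρ1 x)))
    (hL10 : Tendsto (fun n => ∫ x, |ρ0s n x - ρ0 x| ∂μ) atTop (nhds 0))
    (hL11 : Tendsto (fun n => ∫ x, |ρ1s n x - ρ1 x| ∂μ) atTop (nhds 0))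
    (πs : ℕ → Measure (X × X)) (π : Measure (X × X))
    (hπs : ∀ n, IsCoupling (πs n) (μ.withDensity fun x => ENNReal.ofReal (ρ0s n x))
      (μ.withDensity fun x => ENNReal.ofReal (ρ1s n x)))
    (hπ : IsCoupling π (μ.withDensity fun x => ENNReal.ofReal (ρ0 x))
      (μ.withDensity fun x => ENNReal.ofReal (ρ1 x)))
    (hπw : WeakConv πs π)
    (φ : BoundedContinuousFunction (X × X) ℝ)
    (f0 f1 : X → ℝ) (hf0m : Measurable f0) (hf1m : Measurable f1)
    (hf0b : ∃ M : ℝ, ∀ᵐ x ∂μ, |f0 x| ≤ M) (hf1b : ∃ M : ℝ, ∀ᵐ x ∂μ, |f1 x| ≤ M) :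
    (limsup (fun n => ∫ p, φ p * f0 p.1 ∂(πs n)) atTop ≤ ∫ p, φ p * f0 p.1 ∂π) ∧
    (limsup (fun n => ∫ p, φ p * f1 p.2 ∂(πs n)) atTop ≤ ∫ p, φ p * f1 p.2 ∂π) := by
  have hρ0si (n : ℕ) : Integrable (ρ0s n) μ := by
    have := hp0 n
    exact integrable_of_isFiniteMeasure_withDensity_ofReal (hρ0sm n).aestronglyMeasurable
      (ae_of_all _ (hρ0snn n))
  have hρ1si (n : ℕ) : Integrable (ρ1s n) μ := by
    have := hp1 n
    exact integrable_of_isFiniteMeasure_withDensity_ofReal (hρ1sm n).aestronglyMeasurable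
      (ae_of_all _ (hρ1snn n))
  have hρ0i : Integrable ρ0 μ :=
    integrable_of_isFiniteMeasure_withDensity_ofReal hρ0m.aestronglyMeasurable (ae_of_all _ hρ0nn)
  have hρ1i : Integrable ρ1 μ :=
    integrable_of_isFiniteMeasure_withDensity_ofReal hρ1m.aestronglyMeasurable (ae_of_all _ hρ1nn)
  obtain ⟨M0, hM0⟩ := hf0b
  obtain ⟨M1, hM1⟩ := hf1b
  exact ⟨(tendsto_integral_bcf_mul_comp_of_tendsto_integral_abs_sub hρ0sm hρ0m hρ0snn hρ0nn hρ0si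
      hρ0i hL10 continuous_fst (fun n => (hπs n).1) hπ.1 hπw φ hf0m hM0).limsup_eq.le,
    (tendsto_integral_bcf_mul_comp_of_tendsto_integral_abs_sub hρ1sm hρ1m hρ1snn hρ1nn hρ1si
      hρ1i hL11 continuous_snd (fun n => (hπs n).2) hπ.2 hπw φ hf1m hM1).limsup_eq.le⟩

open MeasureTheory Filter Set in
/-- Upper semicontinuity of integrals `∫ φ(x₀,x₁) fᵢ(xᵢ) dπⁿ` along weakly
convergent couplings, when the marginals have densities converging in `L¹(μ)` and the `fᵢ`
are `μ`-essentially bounded. -/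
theorem integral_limsup_of_L1_densities {X : Type*} [MetricSpace X] [CompleteSpace X]
    [TopologicalSpace.SeparableSpace X] [MeasurableSpace X] [BorelSpace X]
    (μ : Measure X) [IsProbabilityMeasure μ]
    (ρ0s ρ1s : ℕ → X → ℝ) (ρ0 ρ1 : X → ℝ)
    (hρ0sm : ∀ n, Measurable (ρ0s n)) (hρ1sm : ∀ n, Measurable (ρ1s n))
    (hρ0m : Measurable ρ0) (hρ1m : Measurable ρ1)
    (hρ0snn : ∀ n x, 0 ≤ ρ0s n x) (hρ1snn : ∀ n x, 0 ≤ ρ1s n x)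
    (hρ0nn : ∀ x, 0 ≤ ρ0 x) (hρ1nn : ∀ x, 0 ≤ ρ1 x)
    (hp0 : ∀ n, IsProbabilityMeasure (μ.withDensity fun x => ENNReal.ofReal (ρ0s n x)))
    (hp1 : ∀ n, IsProbabilityMeasure (μ.withDensity fun x => ENNReal.ofReal (ρ1s n x)))
    (hq0 : IsProbabilityMeasure (μ.withDensity fun x => ENNReal.ofReal (ρ0 x)))
    (hq1 : IsProbabilityMeasure (μ.withDensity fun x => ENNReal.ofReal (ρ1 x)))
    (hw0 : WeakConv (fun n => μ.withDensity fun x => ENNReal.ofReal (ρ0s n x))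
      (μ.withDensity fun x => ENNReal.ofReal (ρ0 x)))
    (hw1 : WeakConv (fun n => μ.withDensity fun x => ENNReal.ofReal (ρ1s n x))
      (μ.withDensity fun x => ENNReal.ofReal (ρ1 x)))
    (hL10 : Tendsto (fun n => ∫ x, |ρ0s n x - ρ0 x| ∂μ) atTop (nhds 0))
    (hL11 : Tendsto (fun n => ∫ x, |ρ1s n x - ρ1 x| ∂μ) atTop (nhds 0))
    (πs : ℕ → Measure (X × X)) (π : Measure (X × X))
    (hπs : ∀ n, IsCoupling (πs n) (μ.withDensity fun x => ENNReal.ofReal (ρ0s n x))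
      (μ.withDensity fun x => ENNReal.ofReal (ρ1s n x)))
    (hπ : IsCoupling π (μ.withDensity fun x => ENNReal.ofReal (ρ0 x))
      (μ.withDensity fun x => ENNReal.ofReal (ρ1 x)))
    (hπw : WeakConv πs π)
    (φ : BoundedContinuousFunction (X × X) ℝ)
    (f0 f1 : X → ℝ) (hf0m : Measurable f0) (hf1m : Measurable f1)
    (hf0b : ∃ M : ℝ, ∀ᵐ x ∂μ, |f0 x| ≤ M) (hf1b : ∃ M : ℝ, ∀ᵐ x ∂μ, |f1 x| ≤ M) :
    (limsup (fun n => ∫ p, φ p * f0 p.1 ∂(πs n)) atTop ≤ ∫ p, φ p * f0 p.1 ∂π) ∧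
    (limsup (fun n => ∫ p, φ p * f1 p.2 ∂(πs n)) atTop ≤ ∫ p, φ p * f1 p.2 ∂π) :=
  integral_limsup_of_L1_densities_general μ ρ0s ρ1s ρ0 ρ1 hρ0sm hρ1sm hρ0m hρ1m hρ0snn hρ1snn hρ0nn
    hρ1nn hp0 hp1 hq0 hq1 hL10 hL11 πs π hπs hπ hπw φ f0 f1 hf0m hf1m hf0b hf1b
end

section
/- Let X = (X, d_X, μ_X) be an mm-space that is a CD*(K,N) space for some K > 0 and N < 0. Then for all κ₀, κ₁ > 0 with κ₀ + κ₁ < 1 and all Borel sets A₀, A₁ ⊆ X with μ_X(A₀) ≥ κ₀ and μ_X(A₁) ≥ κ₁, one has dist(A₀, A₁) ≤ 2·√(−N/K)·arcosh((κ₀^{1/N} + κ₁^{1/N})/2), where dist(A₀,A₁) := inf{d_X(x,y) : x ∈ A₀, y ∈ A₁} and arcosh(x) = log(x + √(x²−1)) for x ≥ 1. -/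
open MeasureTheory ENNReal Filter Topology Set

/-! Apply `CD*(K,N)` at `t = 1/2` and `N' = N` to the normalized restrictions `ν_i` of `μ_X` to
the two sets. By Jensen's inequality the Rényi entropy of the midpoint is at least `1`. For
`κ = K/N < 0` the distortion coefficient is `σ_κ^{(1/2)}(θ) = 1/(2 cosh(√(-κ) θ/2))`, which is at
most `1/(2 cosh(√(-κ) D/2))` on pairs at distance `≥ D := dist(A₀, A₁)`, and `ν_i` has density
`μ_X(A_i)⁻¹` on `A_i`; so the right-hand side is at most
`(μ_X(A₀)^{1/N} + μ_X(A₁)^{1/N}) / (2 cosh(√(-κ) D/2))`. Hence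
`2 cosh(√(-κ) D/2) ≤ κ₀^{1/N} + κ₁^{1/N}`. The sets are first cut down to large balls so that
`ν_i` have finite second moments, and the bound passes to the limit. -/

open ProbabilityTheory Bornology Metric

namespace IsCoupling

variable {X : Type*} [MeasurableSpace X] {π : Measure (X × X)} {μ ν : Measure X}

lemma isProbabilityMeasure [IsProbabilityMeasure μ] (h : IsCoupling π μ ν) :
    IsProbabilityMeasure π := by
  constructor
  simpa [Measure.map_apply measurable_fst MeasurableSet.univ] using
    congrArg (fun m : Measure X => m univ) h.1

lemma isProbabilityMeasure_right [IsProbabilityMeasure μ] (h : IsCoupling π μ ν) :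
    IsProbabilityMeasure ν := by
  have := h.isProbabilityMeasure
  rw [← h.2]
  exact Measure.isProbabilityMeasure_map measurable_snd.aemeasurable

lemma ae_fst (h : IsCoupling π μ ν) {P : X → Prop} (hP : ∀ᵐ x ∂μ, P x) : ∀ᵐ p ∂π, P p.1 :=
  ae_of_ae_map measurable_fst.aemeasurable (h.1 ▸ hP)

lemma ae_snd (h : IsCoupling π μ ν) {P : X → Prop} (hP : ∀ᵐ x ∂ν, P x) : ∀ᵐ p ∂π, P p.2 :=
  ae_of_ae_map measurable_snd.aemeasurable (h.2 ▸ hP)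

end IsCoupling

lemma isCoupling_prod {X : Type*} [MeasurableSpace X] (μ ν : Measure X) [IsProbabilityMeasure μ]
    [IsProbabilityMeasure ν] : IsCoupling (μ.prod ν) μ ν := by
  constructor <;> simp [Measure.map_fst_prod, Measure.map_snd_prod]

lemma lintegral_ofReal_sq_lt_top_of_ae_le {Y : Type*} [MeasurableSpace Y] {ν : Measure Y}
    [IsFiniteMeasure ν] {f : Y → ℝ} {C : ℝ} (h : ∀ᵐ y ∂ν, f y ≤ C) :
    ∫⁻ y, ENNReal.ofReal (f y) ^ 2 ∂ν < ∞ := by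
  refine (lintegral_mono_ae (h.mono fun y hy => pow_le_pow_left' (ofReal_le_ofReal hy) 2)).trans_lt
    ?_
  rw [lintegral_const]
  exact mul_lt_top (pow_lt_top ofReal_lt_top) (measure_lt_top ν univ)

lemma tendsto_measure_inter_closedBall_nat {X : Type*} [PseudoMetricSpace X] [MeasurableSpace X]
    (μ : Measure X) (s : Set X) (x₀ : X) :
    Tendsto (fun n : ℕ => μ (s ∩ closedBall x₀ n)) atTop (𝓝 (μ s)) := by
  have hmono : Monotone fun n : ℕ => s ∩ closedBall x₀ n := fun i j hij =>
    inter_subset_inter_right _ (closedBall_subset_closedBall (Nat.cast_le.2 hij))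
  simpa only [Function.comp_def, iUnion_inter_closedBall_nat] using
    tendsto_measure_iUnion_atTop (μ := μ) hmono

section Bounded

variable {X : Type*} [PseudoMetricSpace X] [MeasurableSpace X]

lemma hasFiniteSecondMoment_of_isBounded {ν : Measure X} [IsProbabilityMeasure ν] {s : Set X}
    (hs : IsBounded s) (hν : ∀ᵐ x ∂ν, x ∈ s) : HasFiniteSecondMoment ν := by
  obtain ⟨x₀⟩ := nonempty_of_isProbabilityMeasure ν
  obtain ⟨R, hR⟩ := hs.subset_closedBall x₀
  exact ⟨x₀, lintegral_ofReal_sq_lt_top_of_ae_le (hν.mono fun x hx => hR hx)⟩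

lemma W2_lt_top_of_isBounded {ν₀ ν₁ : Measure X} [IsProbabilityMeasure ν₀]
    [IsProbabilityMeasure ν₁] {s : Set X} (hs : IsBounded s) (h₀ : ∀ᵐ x ∂ν₀, x ∈ s)
    (h₁ : ∀ᵐ x ∂ν₁, x ∈ s) : W2 ν₀ ν₁ < ∞ := by
  have hprod := isCoupling_prod ν₀ ν₁
  have hdist : ∀ᵐ p ∂ν₀.prod ν₁, dist p.1 p.2 ≤ diam s := by
    filter_upwards [hprod.ae_fst h₀, hprod.ae_snd h₁] with p hp₁ hp₂
    exact dist_le_diam_of_mem hs hp₁ hp₂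
  calc W2 ν₀ ν₁ ≤ cost2 (ν₀.prod ν₁) := iInf₂_le (ν₀.prod ν₁) hprod
    _ < ∞ := rpow_lt_top_of_nonneg (by norm_num) (lintegral_ofReal_sq_lt_top_of_ae_le hdist).ne

lemma isProbabilityMeasure_of_W2_lt_top {μ ν : Measure X} [IsProbabilityMeasure μ]
    (h : W2 μ ν < ∞) : IsProbabilityMeasure ν := by
  obtain ⟨π, hπ⟩ : ∃ π, IsCoupling π μ ν := by
    by_contra! hno
    simp [W2, hno] at h
  exact hπ.isProbabilityMeasure_right

end Bounded

lemma ENNReal.ofReal_mul_add_one_le_rpow_add {p : ℝ} (hp : 1 ≤ p) (x : ℝ≥0∞) :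
    ENNReal.ofReal p * x + 1 ≤ x ^ p + ENNReal.ofReal p := by
  rcases eq_or_ne x ∞ with rfl | hx
  · simp [top_rpow_of_pos (zero_lt_one.trans_le hp)]
  have hbern : p * x.toReal + 1 ≤ x.toReal ^ p + p := by
    have := one_add_mul_self_le_rpow_one_add (s := x.toReal - 1)
      (by linarith [toReal_nonneg (a := x)]) hp
    rw [add_sub_cancel] at this
    linarith
  calc ENNReal.ofReal p * x + 1 = ENNReal.ofReal (p * x.toReal + 1) := by
        rw [ofReal_add (by positivity) zero_le_one, ofReal_mul (by linarith), ofReal_toReal hx,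
          ofReal_one]
    _ ≤ ENNReal.ofReal (x.toReal ^ p + p) := ofReal_le_ofReal hbern
    _ = x ^ p + ENNReal.ofReal p := by
        rw [ofReal_add (by positivity) (by linarith), ← ofReal_rpow_of_nonneg toReal_nonneg
          (by linarith), ofReal_toReal hx]

lemma one_le_lintegral_rpow {α : Type*} [MeasurableSpace α] {μ : Measure α}
    [IsProbabilityMeasure μ] {ρ : α → ℝ≥0∞} (hρ : Measurable ρ) (hint : ∫⁻ x, ρ x ∂μ = 1)
    {p : ℝ} (hp : 1 ≤ p) : 1 ≤ ∫⁻ x, ρ x ^ p ∂μ := by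
  have h := lintegral_mono (μ := μ) fun x => ENNReal.ofReal_mul_add_one_le_rpow_add hp (ρ x)
  rw [lintegral_add_right _ measurable_const, lintegral_add_right _ measurable_const,
    lintegral_const_mul _ hρ, hint] at h
  simp only [lintegral_const, measure_univ, mul_one] at h
  exact (ENNReal.add_le_add_iff_right ofReal_ne_top).mp (by rwa [add_comm 1])

section RenyiEntropy

variable {X : Type*} [MeasurableSpace X] {μ ν : Measure X} {N : ℝ}

lemma one_le_renyiEntropy [IsProbabilityMeasure μ] [IsProbabilityMeasure ν] (hN : N ≤ 0) :
    1 ≤ renyiEntropy N μ ν := by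
  rw [renyiEntropy]
  split_ifs with hac
  · refine one_le_lintegral_rpow (Measure.measurable_rnDeriv _ _) ?_ ?_
    · rw [Measure.lintegral_rnDeriv hac, measure_univ]
    · linarith [one_div_nonpos.2 hN]
  · exact le_top

lemma renyiEntropy_lt_top_of_ae_rnDeriv_le [IsFiniteMeasure μ] (hN : N ≤ 0) (hac : ν ≪ μ)
    {c : ℝ≥0∞} (hc : c ≠ ∞) (h : ∀ᵐ x ∂μ, ν.rnDeriv μ x ≤ c) : renyiEntropy N μ ν < ∞ := by
  have hp : 0 ≤ 1 - 1 / N := by linarith [one_div_nonpos.2 hN]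
  rw [renyiEntropy, if_pos hac]
  refine (lintegral_mono_ae (h.mono fun x hx => rpow_le_rpow hx hp)).trans_lt ?_
  rw [lintegral_const]
  exact mul_lt_top (rpow_lt_top_of_nonneg hp hc) (measure_lt_top μ univ)

variable {s : Set X}

lemma rnDeriv_cond_ae_eq [IsFiniteMeasure μ] (hs : MeasurableSet s) (hμs : μ s ≠ 0) :
    (μ[|s]).rnDeriv μ =ᵐ[μ] s.indicator fun _ => (μ s)⁻¹ := by
  filter_upwards [Measure.rnDeriv_smul_left_of_ne_top (μ.restrict s) μ (inv_ne_top.2 hμs),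
    Measure.rnDeriv_restrict_self μ hs] with x hx hx'
  rw [ProbabilityTheory.cond, hx, Pi.smul_apply, hx', smul_eq_mul]
  by_cases hxs : x ∈ s <;> simp [hxs]

lemma ae_cond_rnDeriv_eq [IsFiniteMeasure μ] (hs : MeasurableSet s) (hμs : μ s ≠ 0) :
    ∀ᵐ x ∂μ[|s], (μ[|s]).rnDeriv μ x = (μ s)⁻¹ := by
  filter_upwards [cond_absolutelyContinuous.ae_le (rnDeriv_cond_ae_eq hs hμs), ae_cond_mem hs]
    with x hx hxs
  simp [hx, hxs]

lemma renyiEntropy_cond_lt_top [IsFiniteMeasure μ] (hN : N ≤ 0) (hs : MeasurableSet s)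
    (hμs : μ s ≠ 0) : renyiEntropy N μ (μ[|s]) < ∞ :=
  renyiEntropy_lt_top_of_ae_rnDeriv_le hN cond_absolutelyContinuous (inv_ne_top.2 hμs)
    ((rnDeriv_cond_ae_eq hs hμs).mono fun x hx => hx ▸ indicator_le_self _ _ x)

end RenyiEntropy

lemma ENNReal.inv_rpow_neg_eq_ofReal {m : ℝ≥0∞} (h₀ : m ≠ 0) (h : m ≠ ∞) (p : ℝ) :
    m⁻¹ ^ (-p) = ENNReal.ofReal (m.toReal ^ p) := by
  rw [inv_rpow, ← rpow_neg, neg_neg, ← ofReal_rpow_of_pos (toReal_pos h₀ h), ofReal_toReal h]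

lemma sigmaCoeff_half_of_neg {κ : ℝ} (hκ : κ < 0) (θ : ℝ) :
    sigmaCoeff κ (1 / 2) θ = ENNReal.ofReal (1 / (2 * Real.cosh (√(-κ) * θ / 2))) := by
  have homega : omegaKappa κ = ∞ := if_neg hκ.not_gt
  rw [sigmaCoeff, homega, if_pos ofReal_lt_top]
  congr 1
  rcases eq_or_ne θ 0 with rfl | hθ
  · simp [sKappa]
  have ha : 0 < √(-κ) := Real.sqrt_pos.2 (neg_pos.2 hκ)
  rw [sKappa, if_neg (by positivity), if_neg hκ.not_gt, if_pos hκ, sKappa, if_neg hθ,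
    if_neg hκ.not_gt, if_pos hκ]
  have hdouble : Real.sinh (√(-κ) * θ) =
      2 * Real.sinh (√(-κ) * (1 / 2 * θ)) * Real.cosh (√(-κ) * (1 / 2 * θ)) := by
    rw [← Real.sinh_two_mul]; ring_nf
  have hsinh : Real.sinh (√(-κ) * (1 / 2 * θ)) ≠ 0 := by
    rw [Ne, Real.sinh_eq_zero]; positivity
  rw [hdouble]
  field_simp [(Real.cosh_pos _).ne']

lemma sigmaCoeff_half_le_of_le {κ D θ : ℝ} (hκ : κ < 0) (hD : 0 ≤ D) (hθ : D ≤ θ) :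
    sigmaCoeff κ (1 / 2) θ ≤ ENNReal.ofReal (1 / (2 * Real.cosh (√(-κ) * D / 2))) := by
  have hθ₀ : 0 ≤ θ := hD.trans hθ
  rw [sigmaCoeff_half_of_neg hκ]
  refine ofReal_le_ofReal (one_div_le_one_div_of_le (mul_pos two_pos (Real.cosh_pos _)) ?_)
  rw [mul_le_mul_iff_right₀ two_pos, Real.cosh_le_cosh, abs_of_nonneg (by positivity),
    abs_of_nonneg (by positivity)]
  gcongr

lemma lintegral_sigmaCoeff_half_mul_le {Y : Type*} [MeasurableSpace Y] {π : Measure Y}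
    [IsProbabilityMeasure π] {κ D : ℝ} (hκ : κ < 0) (hD : 0 ≤ D) {θ : Y → ℝ}
    (hθ : ∀ᵐ y ∂π, D ≤ θ y) {f : Y → ℝ≥0∞} {c : ℝ≥0∞} (hf : ∀ᵐ y ∂π, f y = c) :
    ∫⁻ y, sigmaCoeff κ (1 / 2) (θ y) * f y ∂π ≤
      ENNReal.ofReal (1 / (2 * Real.cosh (√(-κ) * D / 2))) * c := by
  calc ∫⁻ y, sigmaCoeff κ (1 / 2) (θ y) * f y ∂π
      ≤ ∫⁻ _, ENNReal.ofReal (1 / (2 * Real.cosh (√(-κ) * D / 2))) * c ∂π := by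
        refine lintegral_mono_ae ?_
        filter_upwards [hθ, hf] with y hy hfy
        rw [hfy]
        exact mul_le_mul_left (sigmaCoeff_half_le_of_le hκ hD hy) c
    _ = _ := by simp

lemma Real.le_arcosh_of_cosh_le {u y : ℝ} (hu : 0 ≤ u) (h : Real.cosh u ≤ y) : u ≤ arcosh y := by
  rw [← arcosh_cosh hu]
  exact (arcosh_le_arcosh (cosh_pos u) ((cosh_pos u).trans_le h)).2 h

lemma ENNReal.toReal_rpow_le_rpow_of_ofReal_le {κ : ℝ} (hκ : 0 < κ) {m : ℝ≥0∞} (hm : m ≠ ∞)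
    (h : ENNReal.ofReal κ ≤ m) {p : ℝ} (hp : p ≤ 0) : m.toReal ^ p ≤ κ ^ p :=
  Real.rpow_le_rpow_of_nonpos hκ ((ofReal_le_iff_le_toReal hm).1 h) hp

lemma le_two_mul_sqrt_mul_arcosh_of_two_mul_cosh_le {K N D s : ℝ} (hK : 0 < K) (hN : N < 0)
    (hD : 0 ≤ D) (h : 2 * Real.cosh (√(-(K / N)) * D / 2) ≤ s) :
    D ≤ 2 * √(-N / K) * Real.arcosh (s / 2) := by
  have ha : 0 < √(-(K / N)) := Real.sqrt_pos.2 (neg_pos.2 (div_neg_of_pos_of_neg hK hN))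
  have hsqrt : √(-N / K) = (√(-(K / N)))⁻¹ := by
    rw [neg_div, ← Real.sqrt_inv, ← neg_inv, inv_div]
  calc D = 2 * (√(-(K / N)))⁻¹ * (√(-(K / N)) * D / 2) := by field_simp
    _ ≤ 2 * √(-N / K) * Real.arcosh (s / 2) := by
      rw [hsqrt]
      gcongr
      exact Real.le_arcosh_of_cosh_le (by positivity) (by linarith)

namespace IsCDStarSpace

variable {X : Type*} [MetricSpace X] [MeasurableSpace X] {μX : Measure X}
  [IsProbabilityMeasure μX] {K N : ℝ}

lemma two_mul_cosh_le_of_isBounded (hK : 0 < K) (hN : N < 0) (hCD : IsCDStarSpace K N μX)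
    {B₀ B₁ : Set X} (hB₀ : MeasurableSet B₀) (hB₁ : MeasurableSet B₁) (hb₀ : IsBounded B₀)
    (hb₁ : IsBounded B₁) (h₀ : μX B₀ ≠ 0) (h₁ : μX B₁ ≠ 0) {D : ℝ} (hD : 0 ≤ D)
    (hsep : ∀ x ∈ B₀, ∀ y ∈ B₁, D ≤ dist x y) :
    2 * Real.cosh (√(-(K / N)) * D / 2) ≤
      (μX B₀).toReal ^ (1 / N) + (μX B₁).toReal ^ (1 / N) := by
  have := cond_isProbabilityMeasure h₀
  have := cond_isProbabilityMeasure h₁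
  have hb := hb₀.union hb₁
  have hmem₀ : ∀ᵐ x ∂μX[|B₀], x ∈ B₀ ∪ B₁ := (ae_cond_mem hB₀).mono fun _ => Or.inl
  have hmem₁ : ∀ᵐ x ∂μX[|B₁], x ∈ B₀ ∪ B₁ := (ae_cond_mem hB₁).mono fun _ => Or.inr
  have hent₀ := renyiEntropy_cond_lt_top (N := N) hN.le hB₀ h₀
  have hent₁ := renyiEntropy_cond_lt_top (N := N) hN.le hB₁ h₁
  obtain ⟨νt, π, hνt₀, -, hgeod, ⟨hπ, -⟩, hent⟩ := hCD _ _ inferInstance inferInstance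
    cond_absolutelyContinuous cond_absolutelyContinuous
    (hasFiniteSecondMoment_of_isBounded hb hmem₀) (hasFiniteSecondMoment_of_isBounded hb hmem₁)
    hent₀ hent₁
  have := hπ.isProbabilityMeasure
  have : IsProbabilityMeasure (νt (1 / 2)) := by
    have h := hgeod 0 (by norm_num) (1 / 2) (by norm_num)
    rw [hνt₀] at h
    exact isProbabilityMeasure_of_W2_lt_top
      (h ▸ mul_lt_top ofReal_lt_top (W2_lt_top_of_isBounded hb hmem₀ hmem₁))
  have hdist : ∀ᵐ p ∂π, D ≤ dist p.1 p.2 := by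
    filter_upwards [hπ.ae_fst (ae_cond_mem hB₀), hπ.ae_snd (ae_cond_mem hB₁)] with p hp₁ hp₂
    exact hsep _ hp₁ _ hp₂
  have hκ : K / N < 0 := div_neg_of_pos_of_neg hK hN
  have hmid := hent (1 / 2) (by norm_num) N ⟨le_rfl, hN⟩ hent₀ hent₁
  rw [show (1 : ℝ) - 1 / 2 = 1 / 2 by norm_num] at hmid
  have key := ((one_le_renyiEntropy hN.le).trans hmid).trans <| add_le_add
    (lintegral_sigmaCoeff_half_mul_le hκ hD hdist
      (hπ.ae_fst ((ae_cond_rnDeriv_eq hB₀ h₀).mono fun x hx => congrArg (· ^ (-(1 / N))) hx)))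
    (lintegral_sigmaCoeff_half_mul_le hκ hD hdist
      (hπ.ae_snd ((ae_cond_rnDeriv_eq hB₁ h₁).mono fun x hx => congrArg (· ^ (-(1 / N))) hx)))
  rw [ENNReal.inv_rpow_neg_eq_ofReal h₀ (measure_ne_top _ _),
    ENNReal.inv_rpow_neg_eq_ofReal h₁ (measure_ne_top _ _), ← ofReal_mul (by positivity),
    ← ofReal_mul (by positivity), ← ofReal_add (by positivity) (by positivity), one_le_ofReal,
    ← mul_add, one_div, inv_mul_eq_div, one_le_div (by positivity)] at key
  exact key

lemma two_mul_cosh_le [BorelSpace X] (hK : 0 < K) (hN : N < 0) (hCD : IsCDStarSpace K N μX)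
    {A₀ A₁ : Set X} (hA₀ : MeasurableSet A₀) (hA₁ : MeasurableSet A₁) (h₀ : μX A₀ ≠ 0)
    (h₁ : μX A₁ ≠ 0) {D : ℝ} (hD : 0 ≤ D) (hsep : ∀ x ∈ A₀, ∀ y ∈ A₁, D ≤ dist x y) :
    2 * Real.cosh (√(-(K / N)) * D / 2) ≤
      (μX A₀).toReal ^ (1 / N) + (μX A₁).toReal ^ (1 / N) := by
  obtain ⟨x₀⟩ := nonempty_of_isProbabilityMeasure μX
  have hlim : ∀ A : Set X, μX A ≠ 0 →
      Tendsto (fun n : ℕ => (μX (A ∩ closedBall x₀ n)).toReal ^ (1 / N)) atTop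
        (𝓝 ((μX A).toReal ^ (1 / N))) := fun A hA =>
    ((ENNReal.tendsto_toReal (measure_ne_top _ _)).comp
      (tendsto_measure_inter_closedBall_nat μX A x₀)).rpow_const
      (Or.inl (toReal_pos hA (measure_ne_top _ _)).ne')
  have hpos : ∀ A : Set X, μX A ≠ 0 → ∀ᶠ n : ℕ in atTop, μX (A ∩ closedBall x₀ n) ≠ 0 :=
    fun A hA => ((tendsto_measure_inter_closedBall_nat μX A x₀).eventually_const_lt
      (pos_iff_ne_zero.2 hA)).mono fun _ hn => hn.ne'
  refine ge_of_tendsto ((hlim A₀ h₀).add (hlim A₁ h₁)) ?_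
  filter_upwards [hpos A₀ h₀, hpos A₁ h₁] with n hn₀ hn₁
  exact hCD.two_mul_cosh_le_of_isBounded hK hN (hA₀.inter measurableSet_closedBall)
    (hA₁.inter measurableSet_closedBall) (isBounded_closedBall.subset inter_subset_right)
    (isBounded_closedBall.subset inter_subset_right) hn₀ hn₁ hD
    fun x hx y hy => hsep x hx.1 y hy.1

end IsCDStarSpace

open MeasureTheory Set in
theorem sep_bound_of_CDstar_general {X : Type*} [MetricSpace X]
    [MeasurableSpace X] [BorelSpace X]
    (μX : Measure X) [IsProbabilityMeasure μX]
    (K N : ℝ) (hK : 0 < K) (hN : N < 0) (hCD : IsCDStarSpace K N μX)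
    (κ₀ κ₁ : ℝ) (h0 : 0 < κ₀) (h1 : 0 < κ₁)
    (A₀ A₁ : Set X) (hA₀ : MeasurableSet A₀) (hA₁ : MeasurableSet A₁)
    (hm0 : ENNReal.ofReal κ₀ ≤ μX A₀) (hm1 : ENNReal.ofReal κ₁ ≤ μX A₁) :
    (⨅ x ∈ A₀, ⨅ y ∈ A₁, edist x y) ≤
      ENNReal.ofReal (2 * Real.sqrt (-N / K) *
        acosh ((κ₀ ^ (1 / N) + κ₁ ^ (1 / N)) / 2)) := by
  have hμ₀ : μX A₀ ≠ 0 := ((ofReal_pos.2 h0).trans_le hm0).ne'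
  have hμ₁ : μX A₁ ≠ 0 := ((ofReal_pos.2 h1).trans_le hm1).ne'
  obtain ⟨x₀, hx₀⟩ := nonempty_of_measure_ne_zero hμ₀
  obtain ⟨y₀, hy₀⟩ := nonempty_of_measure_ne_zero hμ₁
  set L := ⨅ x ∈ A₀, ⨅ y ∈ A₁, edist x y
  have hL : L ≠ ∞ :=
    ne_top_of_le_ne_top (edist_ne_top x₀ y₀) ((iInf₂_le x₀ hx₀).trans (iInf₂_le y₀ hy₀))
  have hsep : ∀ x ∈ A₀, ∀ y ∈ A₁, L.toReal ≤ dist x y := fun x hx y hy => by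
    rw [dist_edist]
    exact toReal_mono (edist_ne_top x y) ((iInf₂_le x hx).trans (iInf₂_le y hy))
  have hN' : 1 / N ≤ 0 := one_div_nonpos.2 hN.le
  have hcosh : 2 * Real.cosh (√(-(K / N)) * L.toReal / 2) ≤ κ₀ ^ (1 / N) + κ₁ ^ (1 / N) :=
    (hCD.two_mul_cosh_le hK hN hA₀ hA₁ hμ₀ hμ₁ toReal_nonneg hsep).trans <| add_le_add
      (toReal_rpow_le_rpow_of_ofReal_le h0 (measure_ne_top _ _) hm0 hN')
      (toReal_rpow_le_rpow_of_ofReal_le h1 (measure_ne_top _ _) hm1 hN')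
  rw [← ofReal_toReal hL]
  exact ofReal_le_ofReal (le_two_mul_sqrt_mul_arcosh_of_two_mul_cosh_le hK hN toReal_nonneg hcosh)

open MeasureTheory Set in
/-- Separation distance bound for `CD*(K,N)` spaces with `K > 0`, `N < 0`. -/
theorem sep_bound_of_CDstar {X : Type*} [MetricSpace X] [CompleteSpace X]
    [TopologicalSpace.SeparableSpace X] [MeasurableSpace X] [BorelSpace X]
    (μX : Measure X) [IsProbabilityMeasure μX]
    (K N : ℝ) (hK : 0 < K) (hN : N < 0) (hCD : IsCDStarSpace K N μX)
    (κ₀ κ₁ : ℝ) (h0 : 0 < κ₀) (h1 : 0 < κ₁) (hsum : κ₀ + κ₁ < 1)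
    (A₀ A₁ : Set X) (hA₀ : MeasurableSet A₀) (hA₁ : MeasurableSet A₁)
    (hm0 : ENNReal.ofReal κ₀ ≤ μX A₀) (hm1 : ENNReal.ofReal κ₁ ≤ μX A₁) :
    (⨅ x ∈ A₀, ⨅ y ∈ A₁, edist x y) ≤
      ENNReal.ofReal (2 * Real.sqrt (-N / K) *
        acosh ((κ₀ ^ (1 / N) + κ₁ ^ (1 / N)) / 2)) :=
  sep_bound_of_CDstar_general μX K N hK hN hCD κ₀ κ₁ h0 h1 A₀ A₁ hA₀ hA₁ hm0 hm1
end
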